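/- arXiv:2006.07769 — 3 statements merged into one kernel-verified Lean document; each statement's English description precedes it below -/
import Mathlib

section
/- Let f : ℝ^m → ℝ satisfy the standing assumptions and let the variance-reduced SGD iterates be generated by x_{k+1} = x_k − α(∇f(x_k) + w_{k,N_k}) with constant steplength α ∈ (0, 2/(η+L)]. Then for every k ≥ 0, E[‖x_{k+1} − x*‖²] ≤ (1 − 2αηL/(η+L)) · E[‖x_k − x*‖²] + α²ν²/N_k. -/
/-!
Write `d = x_k - x*` and `g = ∇f(x_k)`, so that `x_{k+1} - x* = (d - α g) - α w`.
Since `∇f(x*) = 0`, strong convexity together with the Lipschitz gradient gives the co-coercivity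
inequality `‖g‖² + ηL‖d‖² ≤ (η + L)⟪g, d⟫` (apply the Baillon–Haddad inequality to the convex,
`(L - η)`-smooth function `f - η/2 ‖·‖²`), and for `α ≤ 2/(η + L)` this makes the deterministic
step a contraction: `‖d - α g‖² ≤ (1 - 2αηL/(η + L)) ‖d‖²`. The step `d - α g` is
`F_k`-measurable while `E[w | F_k] = 0`, so the cross term vanishes in expectation and
`E‖x_{k+1} - x*‖² = E‖d - α g‖² + α² E‖w‖²`; finally `E‖w‖² ≤ ν²/N_k`.
-/

open MeasureTheory Filter Real
open scoped Topology RealInnerProductSpace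

section Gradient

variable {E : Type*} [NormedAddCommGroup E] [InnerProductSpace ℝ E] [CompleteSpace E]
  {f : E → ℝ} {G : E → E}

theorem hasDerivAt_apply_add_smul_of_hasGradientAt (hG : ∀ y, HasGradientAt f (G y) y)
    (a d : E) (t : ℝ) : HasDerivAt (fun s : ℝ => f (a + s • d)) ⟪G (a + t • d), d⟫ t := by
  have hline : HasDerivAt (fun s : ℝ => a + s • d) d t := by
    simpa using ((hasDerivAt_id t).smul_const d).const_add a
  simpa [Function.comp_def] using
    (hasGradientAt_iff_hasFDerivAt.1 (hG _)).comp_hasDerivAt t hline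

theorem le_apply_add_of_le_inner_sub (hG : ∀ y, HasGradientAt f (G y) y) {μ : ℝ}
    (hmono : ∀ u v, μ * ‖u - v‖ ^ 2 ≤ ⟪G u - G v, u - v⟫) (a d : E) :
    f a + ⟪G a, d⟫ + μ / 2 * ‖d‖ ^ 2 ≤ f (a + d) := by
  set φ : ℝ → ℝ := fun t => f (a + t • d) - t * ⟪G a, d⟫ - μ / 2 * t ^ 2 * ‖d‖ ^ 2
  have hφ : ∀ t, HasDerivAt φ (⟪G (a + t • d), d⟫ - ⟪G a, d⟫ - μ * t * ‖d‖ ^ 2) t := by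
    intro t
    refine (((hasDerivAt_apply_add_smul_of_hasGradientAt hG a d t).sub
      ((hasDerivAt_id t).mul_const ⟪G a, d⟫)).sub
      (((hasDerivAt_pow 2 t).const_mul (μ / 2)).mul_const (‖d‖ ^ 2))).congr_deriv ?_
    ring
  have hmon : MonotoneOn φ (Set.Ici 0) := by
    refine monotoneOn_of_hasDerivWithinAt_nonneg (convex_Ici 0)
      (fun t _ => (hφ t).continuousAt.continuousWithinAt)
      (fun t _ => (hφ t).hasDerivWithinAt) fun t ht => ?_
    rw [interior_Ici] at ht
    have key := hmono (a + t • d) a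
    rw [add_sub_cancel_left, norm_smul, real_inner_smul_right, inner_sub_left] at key
    rw [Real.norm_eq_abs, abs_of_pos ht] at key
    have := le_of_mul_le_mul_left
      (by linarith : t * (μ * t * ‖d‖ ^ 2) ≤ t * (⟪G (a + t • d), d⟫ - ⟪G a, d⟫)) ht
    linarith
  have := hmon (Set.mem_Ici.2 le_rfl) (Set.mem_Ici.2 zero_le_one) zero_le_one
  simp only [φ, zero_smul, one_smul, add_zero, zero_mul, mul_zero, sub_zero, one_mul, mul_one,
    one_pow, ne_eq, OfNat.ofNat_ne_zero, not_false_eq_true, zero_pow] at this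
  linarith

theorem apply_add_le_of_inner_sub_le (hG : ∀ y, HasGradientAt f (G y) y) {L : ℝ}
    (hle : ∀ u v, ⟪G u - G v, u - v⟫ ≤ L * ‖u - v‖ ^ 2) (a d : E) :
    f (a + d) ≤ f a + ⟪G a, d⟫ + L / 2 * ‖d‖ ^ 2 := by
  have hG' : ∀ y, HasGradientAt (fun z => -f z) (-G y) y := fun y =>
    hasGradientAt_iff_hasFDerivAt.2 <| by
      rw [map_neg]; exact (hasGradientAt_iff_hasFDerivAt.1 (hG y)).neg
  have := le_apply_add_of_le_inner_sub hG' (μ := -L) (fun u v => by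
    rw [← neg_sub', inner_neg_left]; linarith [hle u v]) a d
  rw [inner_neg_left] at this
  linarith

end Gradient

section Cocoercive

variable {E : Type*} [NormedAddCommGroup E] [InnerProductSpace ℝ E]

theorem inv_mul_norm_sub_sq_le_inner_sub {h : E → ℝ} {G : E → E} {M : ℝ} (hM : 0 < M)
    (hlow : ∀ a d, h a + ⟪G a, d⟫ ≤ h (a + d))
    (hup : ∀ a d, h (a + d) ≤ h a + ⟪G a, d⟫ + M / 2 * ‖d‖ ^ 2) (a b : E) :
    M⁻¹ * ‖G a - G b‖ ^ 2 ≤ ⟪G a - G b, a - b⟫ := by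
  -- compare `h` at `b + d` with its linearisations at `a` and at `b`, for `d = M⁻¹ (G a - G b)`
  have key : ∀ a b, h a + ⟪G a, b - a⟫ + (2 * M)⁻¹ * ‖G a - G b‖ ^ 2 ≤ h b := by
    intro a b
    set d := M⁻¹ • (G a - G b)
    have h₁ := hlow a (b + d - a)
    have h₂ := hup b d
    rw [add_sub_cancel] at h₁
    have e₁ : ⟪G a, b + d - a⟫ = ⟪G a, b - a⟫ + ⟪G a, d⟫ := by
      rw [add_sub_right_comm, inner_add_right]
    have e₂ : ⟪G a, d⟫ - ⟪G b, d⟫ = M⁻¹ * ‖G a - G b‖ ^ 2 := by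
      rw [← inner_sub_left, real_inner_smul_right, real_inner_self_eq_norm_sq]
    have e₃ : ‖d‖ ^ 2 = M⁻¹ ^ 2 * ‖G a - G b‖ ^ 2 := by
      rw [norm_smul, mul_pow, Real.norm_eq_abs, sq_abs]
    have e₄ : M / 2 * (M⁻¹ ^ 2 * ‖G a - G b‖ ^ 2)
        = M⁻¹ * ‖G a - G b‖ ^ 2 - (2 * M)⁻¹ * ‖G a - G b‖ ^ 2 := by
      field_simp; ring
    rw [e₃, e₄] at h₂
    linarith
  have hab := key a b
  have hba := key b a
  rw [norm_sub_rev (G b)] at hba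
  have e : ⟪G a, b - a⟫ + ⟪G b, a - b⟫ = -⟪G a - G b, a - b⟫ := by
    rw [← neg_sub a b, inner_neg_right, inner_sub_left]; ring
  have e' : M⁻¹ * ‖G a - G b‖ ^ 2 = 2 * ((2 * M)⁻¹ * ‖G a - G b‖ ^ 2) := by
    field_simp
  linarith

end Cocoercive

section StronglyConvex

variable {E : Type*} [NormedAddCommGroup E] [InnerProductSpace ℝ E] [CompleteSpace E]
  {f : E → ℝ} {G : E → E}

theorem norm_sub_sq_add_mul_le_inner_sub (hG : ∀ y, HasGradientAt f (G y) y) {η L : ℝ}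
    (hηL : η ≤ L) (hlip : ∀ u v, ‖G u - G v‖ ≤ L * ‖u - v‖)
    (hsc : ∀ u v, η * ‖u - v‖ ^ 2 ≤ ⟪G u - G v, u - v⟫) (a b : E) :
    ‖G a - G b‖ ^ 2 + η * L * ‖a - b‖ ^ 2 ≤ (η + L) * ⟪G a - G b, a - b⟫ := by
  have hle : ∀ u v, ⟪G u - G v, u - v⟫ ≤ L * ‖u - v‖ ^ 2 := fun u v => by
    nlinarith [real_inner_le_norm (G u - G v) (u - v), hlip u v, norm_nonneg (u - v)]
  rcases hηL.eq_or_lt with rfl | hlt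
  · rw [le_antisymm (hle a b) (hsc a b)]
    nlinarith [mul_self_le_mul_self (norm_nonneg _) (hlip a b)]
  -- `f - η/2 ‖·‖²` is convex and `(L - η)`-smooth, with gradient `G - η id`
  have key := inv_mul_norm_sub_sq_le_inner_sub (h := fun y => f y - η / 2 * ‖y‖ ^ 2)
    (G := fun y => G y - η • y) (sub_pos.2 hlt)
    (fun a d => by
      have := le_apply_add_of_le_inner_sub hG hsc a d
      simp only [inner_sub_left, real_inner_smul_left, norm_add_sq_real]
      linarith)
    (fun a d => by
      have := apply_add_le_of_inner_sub_le hG hle a d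
      simp only [inner_sub_left, real_inner_smul_left, norm_add_sq_real]
      linarith) a b
  have e : G a - η • a - (G b - η • b) = (G a - G b) - η • (a - b) := by
    rw [smul_sub]; abel
  rw [e, inv_mul_le_iff₀ (sub_pos.2 hlt)] at key
  generalize G a - G b = g at key ⊢
  generalize a - b = d at key ⊢
  rw [norm_sub_sq_real, inner_sub_left, real_inner_smul_left, real_inner_smul_right, norm_smul,
    mul_pow, Real.norm_eq_abs, sq_abs, real_inner_self_eq_norm_sq] at key
  nlinarith

end StronglyConvex

section GradientStep

variable {E : Type*} [NormedAddCommGroup E] [InnerProductSpace ℝ E]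

theorem norm_sub_smul_sq_le_of_norm_sq_add_mul_le_inner {g d : E} {η L α : ℝ}
    (hηL : 0 < η + L) (hα : 0 ≤ α) (hα' : α ≤ 2 / (η + L))
    (hgd : ‖g‖ ^ 2 + η * L * ‖d‖ ^ 2 ≤ (η + L) * ⟪g, d⟫) :
    ‖d - α • g‖ ^ 2 ≤ (1 - 2 * α * η * L / (η + L)) * ‖d‖ ^ 2 := by
  have hα'' : α * (η + L) ≤ 2 := (le_div_iff₀ hηL).1 hα'
  rw [norm_sub_sq_real, real_inner_smul_right, norm_smul, mul_pow, Real.norm_eq_abs, sq_abs,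
    real_inner_comm, ← mul_le_mul_iff_right₀ hηL]
  have : (η + L) * ((1 - 2 * α * η * L / (η + L)) * ‖d‖ ^ 2)
      = (η + L) * ‖d‖ ^ 2 - 2 * α * η * L * ‖d‖ ^ 2 := by
    field_simp
  rw [this]
  nlinarith [mul_le_mul_of_nonneg_left hgd (by positivity : (0 : ℝ) ≤ 2 * α),
    mul_nonneg (mul_nonneg hα (sq_nonneg ‖g‖)) (sub_nonneg.2 hα'')]

end GradientStep

section Expectation

variable {Ω E : Type*} [NormedAddCommGroup E] [InnerProductSpace ℝ E]
  {m m₀ : MeasurableSpace Ω} {μ : Measure Ω}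

theorem integrable_inner_of_integrable_norm_sq {Y W : Ω → E} (hY : AEStronglyMeasurable Y μ)
    (hW : AEStronglyMeasurable W μ) (hY₂ : Integrable (fun ω => ‖Y ω‖ ^ 2) μ)
    (hW₂ : Integrable (fun ω => ‖W ω‖ ^ 2) μ) :
    Integrable (fun ω => ⟪Y ω, W ω⟫) μ :=
  memLp_one_iff_integrable.1 <| MemLp.of_bilin (p := 2) (q := 2) (fun y w => ⟪y, w⟫) 1
    ((memLp_two_iff_integrable_sq_norm hY).2 hY₂) ((memLp_two_iff_integrable_sq_norm hW).2 hW₂)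
    (hY.inner hW) (ae_of_all _ fun ω => by simpa using nnnorm_inner_le_nnnorm (Y ω) (W ω))

variable [CompleteSpace E]

theorem integral_inner_eq_zero_of_condExp_eq_zero (hm : m ≤ m₀) [SigmaFinite (μ.trim hm)]
    {Y W : Ω → E} (hY : StronglyMeasurable[m] Y) (hYW : Integrable (fun ω => ⟪Y ω, W ω⟫) μ)
    (hW : Integrable W μ) (hW₀ : μ[W | m] =ᵐ[μ] 0) :
    ∫ ω, ⟪Y ω, W ω⟫ ∂μ = 0 := by
  have hpull : μ[fun ω => ⟪Y ω, W ω⟫ | m] =ᵐ[μ] 0 := by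
    filter_upwards [condExp_bilin_of_stronglyMeasurable_left (innerSL ℝ) hY hYW hW, hW₀]
      with ω hω hω₀
    rwa [hω₀, Pi.zero_apply, map_zero] at hω
  rw [← integral_condExp hm, integral_congr_ae hpull, Pi.zero_def, integral_zero]

theorem integral_norm_sub_smul_sq_of_condExp_eq_zero (hm : m ≤ m₀) [SigmaFinite (μ.trim hm)]
    {Y W : Ω → E} (hY : StronglyMeasurable[m] Y) (hY₂ : Integrable (fun ω => ‖Y ω‖ ^ 2) μ)
    (hW : Integrable W μ) (hW₂ : Integrable (fun ω => ‖W ω‖ ^ 2) μ) (hW₀ : μ[W | m] =ᵐ[μ] 0)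
    (c : ℝ) :
    ∫ ω, ‖Y ω - c • W ω‖ ^ 2 ∂μ = ∫ ω, ‖Y ω‖ ^ 2 ∂μ + c ^ 2 * ∫ ω, ‖W ω‖ ^ 2 ∂μ := by
  have hYW := integrable_inner_of_integrable_norm_sq (hY.mono hm).aestronglyMeasurable
    hW.aestronglyMeasurable hY₂ hW₂
  have hexpand : ∀ ω, ‖Y ω - c • W ω‖ ^ 2
      = ‖Y ω‖ ^ 2 - 2 * c * ⟪Y ω, W ω⟫ + c ^ 2 * ‖W ω‖ ^ 2 := fun ω => by
    rw [norm_sub_sq_real, real_inner_smul_right, norm_smul, mul_pow, Real.norm_eq_abs, sq_abs]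
    ring
  have hcross : Integrable (fun ω => 2 * c * ⟪Y ω, W ω⟫) μ := hYW.const_mul _
  have hdiff : Integrable (fun ω => ‖Y ω‖ ^ 2 - 2 * c * ⟪Y ω, W ω⟫) μ := hY₂.sub hcross
  simp_rw [hexpand]
  rw [integral_add hdiff (hW₂.const_mul _), integral_sub hY₂ hcross, integral_const_mul,
    integral_const_mul, integral_inner_eq_zero_of_condExp_eq_zero hm hY hYW hW hW₀]
  ring

theorem integral_le_of_condExp_le_const [IsProbabilityMeasure μ] (hm : m ≤ m₀)
    {X : Ω → ℝ} {c : ℝ} (hX : μ[X | m] ≤ᵐ[μ] fun _ => c) : ∫ ω, X ω ∂μ ≤ c := by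
  rw [← integral_condExp hm]
  simpa using integral_mono_ae integrable_condExp (integrable_const c) hX

end Expectation

theorem stmt_0_general
    {m : ℕ} {Ω : Type*} {m0 : MeasurableSpace Ω} {μ : Measure Ω}
    [IsProbabilityMeasure μ] (ℱ : Filtration ℕ m0)
    (f : EuclideanSpace ℝ (Fin m) → ℝ) (xstar : EuclideanSpace ℝ (Fin m))
    (x w : ℕ → Ω → EuclideanSpace ℝ (Fin m)) (N : ℕ → ℕ)
    (η L ν α : ℝ)
    (hη : 0 < η) (hηL : η ≤ L)
    (hf : ContDiff ℝ 1 f)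
    (hlip : ∀ a b, ‖gradient f a - gradient f b‖ ≤ L * ‖a - b‖)
    (hsc : ∀ a b, η * ‖a - b‖ ^ 2 ≤ (inner ℝ (gradient f a - gradient f b) (a - b) : ℝ))
    (hmin : ∀ z, f xstar ≤ f z)
    (hadapted : ∀ k, StronglyMeasurable[ℱ k] (x k))
    (hwint : ∀ k, Integrable (w k) μ)
    (hwsqint : ∀ k, Integrable (fun ω => ‖w k ω‖ ^ 2) μ)
    (hw0 : ∀ k, μ[w k | ℱ k] =ᵐ[μ] 0)
    (hwvar : ∀ k, μ[fun ω => ‖w k ω‖ ^ 2 | ℱ k] ≤ᵐ[μ] fun _ => ν ^ 2 / N k)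
    (hxint : ∀ k, Integrable (fun ω => ‖x k ω - xstar‖ ^ 2) μ)
    (hα : 0 < α) (hα' : α ≤ 2 / (η + L))
    (hrec : ∀ k ω, x (k + 1) ω = x k ω - α • (gradient f (x k ω) + w k ω)) :
    ∀ k, ∫ ω, ‖x (k + 1) ω - xstar‖ ^ 2 ∂μ ≤
      (1 - 2 * α * η * L / (η + L)) * ∫ ω, ‖x k ω - xstar‖ ^ 2 ∂μ
        + α ^ 2 * ν ^ 2 / N k := by
  intro k
  set c := 1 - 2 * α * η * L / (η + L)
  set y := fun ω => x k ω - xstar - α • gradient f (x k ω)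
  have hG : ∀ z, HasGradientAt f (gradient f z) z := fun z =>
    (hf.differentiable one_ne_zero z).hasGradientAt
  have hG₀ : gradient f xstar = 0 := by
    simpa [gradient] using (IsLocalMin.fderiv_eq_zero (.of_forall hmin))
  have hy : ∀ ω, ‖y ω‖ ^ 2 ≤ c * ‖x k ω - xstar‖ ^ 2 := fun ω => by
    have := norm_sub_sq_add_mul_le_inner_sub hG hηL hlip hsc (x k ω) xstar
    rw [hG₀, sub_zero] at this
    exact norm_sub_smul_sq_le_of_norm_sq_add_mul_le_inner (by linarith) hα.le hα' this
  have hy_meas : StronglyMeasurable[ℱ k] y :=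
    ((hadapted k).sub stronglyMeasurable_const).sub
      ((((InnerProductSpace.toDual ℝ _).symm.continuous.comp
        (hf.continuous_fderiv one_ne_zero)).comp_stronglyMeasurable (hadapted k)).const_smul α)
  have hy₂ : Integrable (fun ω => ‖y ω‖ ^ 2) μ :=
    ((hxint k).const_mul c).mono' ((hy_meas.mono (ℱ.le k)).aestronglyMeasurable.norm.pow 2)
      (ae_of_all _ fun ω => by simpa using hy ω)
  have hstep : ∀ ω, x (k + 1) ω - xstar = y ω - α • w k ω := fun ω => by
    simp only [y, hrec, smul_add]; abel
  simp_rw [hstep]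
  rw [integral_norm_sub_smul_sq_of_condExp_eq_zero (ℱ.le k) hy_meas hy₂ (hwint k) (hwsqint k)
    (hw0 k), mul_div_assoc]
  gcongr ?_ + α ^ 2 * ?_
  · rw [← integral_const_mul]
    exact integral_mono hy₂ ((hxint k).const_mul c) hy
  · exact integral_le_of_condExp_le_const (ℱ.le k) (hwvar k)

/-- **Lemma 1 (recursion for variance-reduced SGD).**
If `f` is `η`-strongly convex with `L`-Lipschitz gradient, the iterates
`x_{k+1} = x_k − α(∇f(x_k) + w_{k,N_k})` with `α ∈ (0, 2/(η+L)]` satisfy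
`E[‖x_{k+1} − x*‖²] ≤ (1 − 2αηL/(η+L)) E[‖x_k − x*‖²] + α²ν²/N_k`. -/
theorem stmt_0
    {m : ℕ} {Ω : Type*} {m0 : MeasurableSpace Ω} {μ : Measure Ω}
    [IsProbabilityMeasure μ] (ℱ : Filtration ℕ m0)
    (f : EuclideanSpace ℝ (Fin m) → ℝ) (xstar : EuclideanSpace ℝ (Fin m))
    (x w : ℕ → Ω → EuclideanSpace ℝ (Fin m)) (N : ℕ → ℕ)
    (η L ν α : ℝ)
    (hη : 0 < η) (hηL : η ≤ L) (hν : 0 < ν)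
    (hf : ContDiff ℝ 1 f)
    (hlip : ∀ a b, ‖gradient f a - gradient f b‖ ≤ L * ‖a - b‖)
    (hsc : ∀ a b, η * ‖a - b‖ ^ 2 ≤ (inner ℝ (gradient f a - gradient f b) (a - b) : ℝ))
    (hmin : ∀ z, f xstar ≤ f z)
    (hN : ∀ k, 1 ≤ N k)
    (hadapted : ∀ k, StronglyMeasurable[ℱ k] (x k))
    (hwint : ∀ k, Integrable (w k) μ)
    (hwsqint : ∀ k, Integrable (fun ω => ‖w k ω‖ ^ 2) μ)
    (hw0 : ∀ k, μ[w k | ℱ k] =ᵐ[μ] 0)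
    (hwvar : ∀ k, μ[fun ω => ‖w k ω‖ ^ 2 | ℱ k] ≤ᵐ[μ] fun _ => ν ^ 2 / N k)
    (hxint : ∀ k, Integrable (fun ω => ‖x k ω - xstar‖ ^ 2) μ)
    (hα : 0 < α) (hα' : α ≤ 2 / (η + L))
    (hrec : ∀ k ω, x (k + 1) ω = x k ω - α • (gradient f (x k ω) + w k ω)) :
    ∀ k, ∫ ω, ‖x (k + 1) ω - xstar‖ ^ 2 ∂μ ≤
      (1 - 2 * α * η * L / (η + L)) * ∫ ω, ‖x k ω - xstar‖ ^ 2 ∂μ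
        + α ^ 2 * ν ^ 2 / N k :=
  stmt_0_general ℱ f xstar x w N η L ν α hη hηL hf hlip hsc hmin hadapted hwint hwsqint hw0 hwvar
    hxint hα hα' hrec
end

section
/- Let f satisfy the standing assumptions and let the variance-reduced accelerated SGD iterates be generated by y_{k+1} = x_k − α(∇f(x_k) + w_{k,N_k}) and x_{k+1} = y_{k+1} + β(y_{k+1} − y_k) with x_0 = y_0, α ∈ (0, 1/L], γ = √(αη), β = (1−γ)/(1+γ), and batch sizes N_k = ⌈ρ₂^{−(k+1)}⌉ with ρ₂ ∈ (1−γ, 1). Then for every k ≥ 0, E[f(y_k)] − f* ≤ ρ₂^k · ( ((η+L)/2)·E[‖x_0 − x*‖²] + (ρ₂ ν²/(ρ₂ − (1−γ)))·(α + (1−γ)γ/(2η)) ), and moreover there exists a constant c > 0 such that E[‖x_k − x*‖²] ≤ c · ρ₂^k for all k. -/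
/-!
A Lyapunov argument for the estimate sequence of Nesterov's method. With the auxiliary iterate
`v_k = x_k + γ⁻¹ (x_k - y_k)`, the potential `Φ_k = f(y_k) - f⋆ + (η/2) ‖v_k - x⋆‖²` satisfies,
pathwise, `Φ_{k+1} ≤ (1 - γ) Φ_k + α ‖w_k‖² + ⟪Z_k, w_k⟫` with `Z_k` measurable w.r.t. `ℱ k`:
the descent lemma bounds the gradient step (`α ≤ 1/L`), strong convexity at `x_k`, compared with
`x⋆` and with `y_k`, bounds `f(x_k) - f⋆` and `f(x_k) - f(y_k)`, and `γ² = α η` makes the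
gradient terms cancel. In expectation the cross term vanishes and
`E ‖w_k‖² ≤ ν²/N_k ≤ ν² ρ₂^(k+1)`, so `E Φ_k = O(ρ₂^k)` because `1 - γ < ρ₂`. Finally
`f(y_k) - f⋆ ≤ Φ_k`, and `x_k` is a convex combination of `y_k` and `v_k`, whence
`‖x_k - x⋆‖² ≤ (2/η) Φ_k`.
-/

open MeasureTheory Filter Real
open scoped Topology RealInnerProductSpace Gradient

theorem image_zero_le_image_one_of_hasDerivAt {φ φ' : ℝ → ℝ}
    (hφ : ∀ t, HasDerivAt φ (φ' t) t) (hφ' : ∀ t, 0 < t → 0 ≤ φ' t) : φ 0 ≤ φ 1 :=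
  monotoneOn_of_hasDerivWithinAt_nonneg (convex_Ici 0)
    (fun t _ => (hφ t).continuousAt.continuousWithinAt) (fun t _ => (hφ t).hasDerivWithinAt)
    (fun t ht => hφ' t (by simpa using ht)) Set.self_mem_Ici (by norm_num) zero_le_one

theorem le_pow_mul_of_le_mul_add_pow {a : ℕ → ℝ} {q r c : ℝ} (hq : 0 ≤ q) (hqr : q < r)
    (hc : 0 ≤ c) (ha₀ : 0 ≤ a 0) (h : ∀ k, a (k + 1) ≤ q * a k + c * r ^ (k + 1)) (k : ℕ) :
    a k ≤ r ^ k * (a 0 + c * r / (r - q)) := by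
  have hr : 0 < r := hq.trans_lt hqr
  set M := a 0 + c * r / (r - q)
  have hM : c * r ≤ (r - q) * M := by
    have : (r - q) * (c * r / (r - q)) = c * r := mul_div_cancel₀ _ (sub_pos.2 hqr).ne'
    nlinarith [mul_nonneg (sub_pos.2 hqr).le ha₀]
  induction k with
  | zero => simpa [M] using div_nonneg (mul_nonneg hc hr.le) (sub_pos.2 hqr).le
  | succ k ih =>
    calc a (k + 1) ≤ q * (r ^ k * M) + c * r ^ (k + 1) :=
          (h k).trans (by gcongr)
      _ ≤ r ^ (k + 1) * M := by
          rw [pow_succ]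
          nlinarith [mul_le_mul_of_nonneg_left hM (pow_pos hr k).le]

theorem div_natCeil_inv_le_mul {c t : ℝ} (hc : 0 ≤ c) (ht : 0 < t) : c / ⌈t⁻¹⌉₊ ≤ c * t := by
  have hN : t⁻¹ ≤ ⌈t⁻¹⌉₊ := Nat.le_ceil _
  rw [div_le_iff₀ ((inv_pos.2 ht).trans_le hN)]
  calc c = c * t * t⁻¹ := by field_simp
    _ ≤ c * t * ⌈t⁻¹⌉₊ := by gcongr

section InnerProductSpace

variable {E : Type*} [NormedAddCommGroup E] [InnerProductSpace ℝ E]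

theorem norm_smul_add_smul_sq_le {a : ℝ} (ha₀ : 0 ≤ a) (ha₁ : a ≤ 1) (x y : E) :
    ‖a • x + (1 - a) • y‖ ^ 2 ≤ a * ‖x‖ ^ 2 + (1 - a) * ‖y‖ ^ 2 := by
  have hexp : ‖a • x + (1 - a) • y‖ ^ 2
      = a * ‖x‖ ^ 2 + (1 - a) * ‖y‖ ^ 2 - a * (1 - a) * ‖x - y‖ ^ 2 := by
    rw [norm_add_sq_real, norm_sub_sq_real, norm_smul, norm_smul, real_inner_smul_left,
      real_inner_smul_right, Real.norm_of_nonneg ha₀, Real.norm_of_nonneg (sub_nonneg.2 ha₁)]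
    ring
  have := mul_nonneg (mul_nonneg ha₀ (sub_nonneg.2 ha₁)) (sq_nonneg ‖x - y‖)
  linarith

theorem nesterov_aux_succ {α β γ : ℝ} (hγ : γ ≠ 0) (hβ : β = (1 - γ) / (1 + γ))
    (h1γ : 1 + γ ≠ 0) {x y x' y' g : E} (hy' : y' = x - α • g) (hx' : x' = y' + β • (y' - y)) :
    x' + γ⁻¹ • (x' - y') = γ • x + (1 - γ) • (x + γ⁻¹ • (x - y)) - (α / γ) • g := by
  subst hy' hx' hβ
  match_scalars <;> field_simp <;> ring

noncomputable def potential (f : E → ℝ) (xstar : E) (η γ : ℝ) (x y : E) : ℝ :=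
  f y - f xstar + η / 2 * ‖x + γ⁻¹ • (x - y) - xstar‖ ^ 2

variable {f : E → ℝ} {η γ : ℝ} {xstar : E}

theorem sub_le_potential (hη : 0 ≤ η) (x y : E) : f y - f xstar ≤ potential f xstar η γ x y :=
  le_add_of_nonneg_right (by positivity)

theorem potential_nonneg (hmin : ∀ z, f xstar ≤ f z) (hη : 0 ≤ η) (x y : E) :
    0 ≤ potential f xstar η γ x y :=
  (sub_nonneg.2 (hmin y)).trans (sub_le_potential hη x y)

end InnerProductSpace

section Gradient

variable {E : Type*} [NormedAddCommGroup E] [InnerProductSpace ℝ E] [CompleteSpace E]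
  {f : E → ℝ} {L η α β γ : ℝ} {xstar : E}

theorem hasDerivAt_comp_add_smul (hf : Differentiable ℝ f) (a d : E) (t : ℝ) :
    HasDerivAt (fun s : ℝ => f (a + s • d)) ⟪∇ f (a + t • d), d⟫ t := by
  have hline : HasDerivAt (fun s : ℝ => a + s • d) d t := by
    simpa using ((hasDerivAt_id t).smul_const d).const_add a
  simpa [InnerProductSpace.toDual_apply_apply, Function.comp_def] using
    (hasGradientAt_iff_hasFDerivAt.1 (hf _).hasGradientAt).comp_hasDerivAt t hline

theorem ContDiff.continuous_gradient (hf : ContDiff ℝ 1 f) : Continuous (∇ f) :=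
  (InnerProductSpace.toDual ℝ E).symm.continuous.comp (hf.continuous_fderiv one_ne_zero)

theorem le_add_inner_gradient_add_sq (hf : Differentiable ℝ f)
    (hlip : ∀ a b, ‖∇ f a - ∇ f b‖ ≤ L * ‖a - b‖) (a b : E) :
    f b ≤ f a + ⟪∇ f a, b - a⟫ + L / 2 * ‖b - a‖ ^ 2 := by
  set d := b - a
  have hderiv (t : ℝ) : HasDerivAt
      (fun t => f a + t * ⟪∇ f a, d⟫ + L / 2 * t ^ 2 * ‖d‖ ^ 2 - f (a + t • d))
      (⟪∇ f a, d⟫ + L * t * ‖d‖ ^ 2 - ⟪∇ f (a + t • d), d⟫) t :=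
    ((((hasDerivAt_id t).mul_const ⟪∇ f a, d⟫).const_add (f a)).add
      (((hasDerivAt_pow 2 t).const_mul (L / 2)).mul_const (‖d‖ ^ 2))).sub
      (hasDerivAt_comp_add_smul hf a d t) |>.congr_deriv (by push_cast; ring)
  have key := image_zero_le_image_one_of_hasDerivAt hderiv fun t ht => by
    have h := (real_inner_le_norm (∇ f (a + t • d) - ∇ f a) d).trans
      (mul_le_mul_of_nonneg_right (hlip _ _) (norm_nonneg d))
    rw [inner_sub_left, add_sub_cancel_left, norm_smul, Real.norm_of_nonneg ht.le] at h
    nlinarith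
  norm_num [d] at key ⊢
  linarith

theorem add_inner_gradient_add_sq_le (hf : Differentiable ℝ f)
    (hsc : ∀ a b, η * ‖a - b‖ ^ 2 ≤ ⟪∇ f a - ∇ f b, a - b⟫) (a b : E) :
    f a + ⟪∇ f a, b - a⟫ + η / 2 * ‖b - a‖ ^ 2 ≤ f b := by
  set d := b - a
  have hderiv (t : ℝ) : HasDerivAt
      (fun t => f (a + t • d) - f a - t * ⟪∇ f a, d⟫ - η / 2 * t ^ 2 * ‖d‖ ^ 2)
      (⟪∇ f (a + t • d), d⟫ - ⟪∇ f a, d⟫ - η * t * ‖d‖ ^ 2) t :=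
    (((hasDerivAt_comp_add_smul hf a d t).sub_const (f a)).sub
      ((hasDerivAt_id t).mul_const ⟪∇ f a, d⟫)).sub
      (((hasDerivAt_pow 2 t).const_mul (η / 2)).mul_const (‖d‖ ^ 2)) |>.congr_deriv
      (by push_cast; ring)
  have key := image_zero_le_image_one_of_hasDerivAt hderiv fun t ht => by
    have h := hsc (a + t • d) a
    rw [add_sub_cancel_left, inner_sub_left, real_inner_smul_right, real_inner_smul_right,
      norm_smul, Real.norm_of_nonneg ht.le] at h
    nlinarith
  norm_num [d] at key ⊢
  linarith

theorem image_sub_smul_gradient_add_le (hf : Differentiable ℝ f)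
    (hlip : ∀ a b, ‖∇ f a - ∇ f b‖ ≤ L * ‖a - b‖) (hα : 0 ≤ α) (hαL : α * L ≤ 1) (x e : E) :
    f (x - α • (∇ f x + e)) ≤ f x - α / 2 * ‖∇ f x‖ ^ 2 + α / 2 * ‖e‖ ^ 2 := by
  have h := le_add_inner_gradient_add_sq hf hlip x (x - α • (∇ f x + e))
  rw [sub_sub_cancel_left, inner_neg_right, norm_neg, real_inner_smul_right, norm_smul,
    Real.norm_of_nonneg hα, inner_add_right, real_inner_self_eq_norm_sq] at h
  have hge := norm_add_sq_real (∇ f x) e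
  have hLα : L / 2 * (α * ‖∇ f x + e‖) ^ 2 ≤ α / 2 * ‖∇ f x + e‖ ^ 2 := by
    have := mul_le_mul_of_nonneg_left hαL (mul_nonneg hα (sq_nonneg ‖∇ f x + e‖))
    nlinarith
  nlinarith

theorem potential_step_le (hf : Differentiable ℝ f)
    (hlip : ∀ a b, ‖∇ f a - ∇ f b‖ ≤ L * ‖a - b‖)
    (hsc : ∀ a b, η * ‖a - b‖ ^ 2 ≤ ⟪∇ f a - ∇ f b, a - b⟫)
    (hη : 0 ≤ η) (hα : 0 ≤ α) (hαL : α * L ≤ 1) (hγ₀ : 0 < γ) (hγ₁ : γ ≤ 1)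
    (hγα : γ ^ 2 = α * η) (hβ : β = (1 - γ) / (1 + γ)) {X Y X' Y' e : E}
    (hY' : Y' = X - α • (∇ f X + e)) (hX' : X' = Y' + β • (Y' - Y)) :
    potential f xstar η γ X' Y' ≤ (1 - γ) * potential f xstar η γ X Y + α * ‖e‖ ^ 2 +
      ⟪α • ∇ f X - (γ • (X - xstar) + (1 - γ) • (X - Y)), e⟫ := by
  unfold potential
  set V := X + γ⁻¹ • (X - Y)
  set u := γ • (X - xstar) + (1 - γ) • (V - xstar)
  have hγu : γ • u = γ • (X - xstar) + (1 - γ) • (X - Y) := by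
    simp only [u, V]
    match_scalars <;> field_simp <;> ring
  have hγu_inner (z : E) : γ * ⟪u, z⟫ = γ * ⟪X - xstar, z⟫ + (1 - γ) * ⟪X - Y, z⟫ := by
    rw [← real_inner_smul_left, hγu, inner_add_left, real_inner_smul_left, real_inner_smul_left]
  have hu : ‖u‖ ^ 2 ≤ γ * ‖X - xstar‖ ^ 2 + (1 - γ) * ‖V - xstar‖ ^ 2 :=
    norm_smul_add_smul_sq_le hγ₀.le hγ₁ _ _
  have hV' : η / 2 * ‖X' + γ⁻¹ • (X' - Y') - xstar‖ ^ 2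
      = η / 2 * ‖u‖ ^ 2 - γ * ⟪u, ∇ f X + e⟫ + α / 2 * ‖∇ f X + e‖ ^ 2 := by
    have : X' + γ⁻¹ • (X' - Y') - xstar = u - (α / γ) • (∇ f X + e) := by
      rw [nesterov_aux_succ hγ₀.ne' hβ (by positivity) hY' hX']
      module
    rw [this, norm_sub_sq_real, real_inner_smul_right, norm_smul, Real.norm_eq_abs, mul_pow,
      sq_abs]
    field_simp
    linear_combination (2 * γ * ⟪u, ∇ f X + e⟫ - α * ‖∇ f X + e‖ ^ 2) * hγα
  have hdesc := image_sub_smul_gradient_add_le hf hlip hα hαL X e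
  have hstar := add_inner_gradient_add_sq_le hf hsc X xstar
  have hY := add_inner_gradient_add_sq_le hf hsc X Y
  rw [← neg_sub X xstar, inner_neg_right, norm_neg, real_inner_comm] at hstar
  rw [← neg_sub X Y, inner_neg_right, norm_neg, real_inner_comm] at hY
  have hstarγ := mul_le_mul_of_nonneg_left hstar hγ₀.le
  have hYγ := mul_le_mul_of_nonneg_left hY (sub_nonneg.2 hγ₁)
  have huη := mul_le_mul_of_nonneg_left hu (by positivity : 0 ≤ η / 2)
  have hXY := mul_nonneg (sub_nonneg.2 hγ₁) (mul_nonneg hη (sq_nonneg ‖X - Y‖))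
  have hγug := hγu_inner (∇ f X)
  have hZ : ⟪α • ∇ f X - (γ • (X - xstar) + (1 - γ) • (X - Y)), e⟫
      = α * ⟪∇ f X, e⟫ - γ * ⟪u, e⟫ := by
    rw [← hγu, inner_sub_left, real_inner_smul_left, real_inner_smul_left]
  clear_value u V
  rw [inner_add_right] at hV'
  rw [hV', hY', hZ]
  linarith [congrArg (α / 2 * ·) (norm_add_sq_real (∇ f X) e)]

theorem potential_self_le (hf : Differentiable ℝ f)
    (hlip : ∀ a b, ‖∇ f a - ∇ f b‖ ≤ L * ‖a - b‖) (hgrad : ∇ f xstar = 0) (x : E) :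
    potential f xstar η γ x x ≤ (η + L) / 2 * ‖x - xstar‖ ^ 2 := by
  have := le_add_inner_gradient_add_sq hf hlip xstar x
  rw [hgrad, inner_zero_left] at this
  simp only [potential, sub_self, smul_zero, add_zero]
  linarith

theorem sq_norm_sub_le_potential (hf : Differentiable ℝ f)
    (hsc : ∀ a b, η * ‖a - b‖ ^ 2 ≤ ⟪∇ f a - ∇ f b, a - b⟫) (hgrad : ∇ f xstar = 0)
    (hη : 0 < η) (hγ : 0 < γ) (x y : E) :
    ‖x - xstar‖ ^ 2 ≤ 2 / η * potential f xstar η γ x y := by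
  unfold potential
  set v := x + γ⁻¹ • (x - y)
  have hy := add_inner_gradient_add_sq_le hf hsc xstar y
  rw [hgrad, inner_zero_left] at hy
  have hconv : x - xstar = (1 + γ)⁻¹ • (y - xstar) + (1 - (1 + γ)⁻¹) • (v - xstar) := by
    simp only [v]
    match_scalars <;> field_simp <;> ring
  have ha₀ : 0 ≤ (1 + γ)⁻¹ := by positivity
  have ha₁ : (1 + γ)⁻¹ ≤ 1 := inv_le_one_of_one_le₀ (by linarith)
  have h := norm_smul_add_smul_sq_le ha₀ ha₁ (y - xstar) (v - xstar)
  rw [← hconv] at h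
  have hyη : ‖y - xstar‖ ^ 2 ≤ 2 / η * (f y - f xstar) := by
    rw [div_mul_eq_mul_div, le_div_iff₀ hη]
    linarith
  have : 2 / η * (η / 2) = 1 := by field_simp
  nlinarith [mul_le_of_le_one_left (sq_nonneg ‖y - xstar‖) ha₁,
    mul_le_of_le_one_left (sq_nonneg ‖v - xstar‖) (sub_le_self 1 ha₀)]

end Gradient

section Expectation

variable {Ω E : Type*} {m mΩ : MeasurableSpace Ω} {μ : Measure Ω}
  [NormedAddCommGroup E] [InnerProductSpace ℝ E] {f : E → ℝ} {L η α β γ : ℝ} {xstar : E}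

theorem MeasureTheory.MemLp.integrable_inner {Z w : Ω → E} (hZ : MemLp Z 2 μ)
    (hw : MemLp w 2 μ) : Integrable (fun ω => ⟪Z ω, w ω⟫) μ :=
  memLp_one_iff_integrable.1 ((innerSL ℝ).memLp_of_bilin 1 hZ hw)

theorem integral_inner_eq_zero_of_condExp_eq_zero_s4 [IsFiniteMeasure μ] [CompleteSpace E]
    (hm : m ≤ mΩ) {Z w : Ω → E} (hZ : StronglyMeasurable[m] Z) (hZ₂ : MemLp Z 2 μ)
    (hw₂ : MemLp w 2 μ) (hw : μ[w | m] =ᵐ[μ] 0) : ∫ ω, ⟪Z ω, w ω⟫ ∂μ = 0 := by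
  have hpull := condExp_bilin_of_stronglyMeasurable_left (innerSL ℝ) hZ
    (hZ₂.integrable_inner hw₂) (hw₂.integrable one_le_two)
  calc ∫ ω, ⟪Z ω, w ω⟫ ∂μ = ∫ ω, (μ[fun ω => innerSL ℝ (Z ω) (w ω) | m]) ω ∂μ :=
        (integral_condExp hm).symm
    _ = 0 := by
        rw [integral_congr_ae (hpull.trans (hw.mono fun ω hω => ?_))]
        · exact integral_zero Ω ℝ
        · simp [hω]

theorem integral_le_of_condExp_le [IsProbabilityMeasure μ] (hm : m ≤ mΩ) {X : Ω → ℝ} {c : ℝ}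
    (h : μ[X | m] ≤ᵐ[μ] fun _ => c) : ∫ ω, X ω ∂μ ≤ c := by
  rw [← integral_condExp hm]
  simpa using integral_mono_ae integrable_condExp (integrable_const c) h

theorem MeasureTheory.MemLp.gradient_comp [CompleteSpace E] (hf : ContDiff ℝ 1 f)
    (hlip : ∀ a b, ‖∇ f a - ∇ f b‖ ≤ L * ‖a - b‖) (hgrad : ∇ f xstar = 0) {X : Ω → E}
    (hXm : AEStronglyMeasurable X μ) (hX : MemLp (fun ω => X ω - xstar) 2 μ) :
    MemLp (fun ω => ∇ f (X ω)) 2 μ :=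
  hX.of_le_mul (hf.continuous_gradient.comp_aestronglyMeasurable hXm)
    (ae_of_all _ fun ω => by simpa [hgrad] using hlip (X ω) xstar)

theorem integrable_potential [IsFiniteMeasure μ] {X Y : Ω → E}
    (hfY : Integrable (fun ω => f (Y ω)) μ) (hX : MemLp (fun ω => X ω - xstar) 2 μ)
    (hY : MemLp (fun ω => Y ω - xstar) 2 μ) :
    Integrable (fun ω => potential f xstar η γ (X ω) (Y ω)) μ := by
  have hV : MemLp (fun ω => X ω + γ⁻¹ • (X ω - Y ω) - xstar) 2 μ := by
    convert hX.add ((hX.sub hY).const_smul γ⁻¹) using 2 with ω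
    simp only [Pi.add_apply, Pi.sub_apply, Pi.smul_apply]
    module
  exact (hfY.sub (integrable_const _)).add ((hV.integrable_norm_pow two_ne_zero).const_mul _)

theorem integral_potential_step_le [IsFiniteMeasure μ] [CompleteSpace E] (hm : m ≤ mΩ)
    (hf : ContDiff ℝ 1 f)
    (hlip : ∀ a b, ‖∇ f a - ∇ f b‖ ≤ L * ‖a - b‖)
    (hsc : ∀ a b, η * ‖a - b‖ ^ 2 ≤ ⟪∇ f a - ∇ f b, a - b⟫)
    (hη : 0 ≤ η) (hα : 0 ≤ α) (hαL : α * L ≤ 1) (hγ₀ : 0 < γ) (hγ₁ : γ ≤ 1)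
    (hγα : γ ^ 2 = α * η) (hβ : β = (1 - γ) / (1 + γ)) {X Y X' Y' e : Ω → E}
    (hXm : StronglyMeasurable[m] X) (hYm : StronglyMeasurable[m] Y)
    (hY' : ∀ ω, Y' ω = X ω - α • (∇ f (X ω) + e ω)) (hX' : ∀ ω, X' ω = Y' ω + β • (Y' ω - Y ω))
    (hX₂ : MemLp (fun ω => X ω - xstar) 2 μ) (hY₂ : MemLp (fun ω => Y ω - xstar) 2 μ)
    (hG₂ : MemLp (fun ω => ∇ f (X ω)) 2 μ) (he₂ : MemLp e 2 μ) (he : μ[e | m] =ᵐ[μ] 0)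
    (hP : Integrable (fun ω => potential f xstar η γ (X ω) (Y ω)) μ)
    (hP' : Integrable (fun ω => potential f xstar η γ (X' ω) (Y' ω)) μ) :
    ∫ ω, potential f xstar η γ (X' ω) (Y' ω) ∂μ ≤
      (1 - γ) * ∫ ω, potential f xstar η γ (X ω) (Y ω) ∂μ + α * ∫ ω, ‖e ω‖ ^ 2 ∂μ := by
  set Z := fun ω => α • ∇ f (X ω) - (γ • (X ω - xstar) + (1 - γ) • (X ω - Y ω))
  have hZm : StronglyMeasurable[m] Z :=
    ((hf.continuous_gradient.comp_stronglyMeasurable hXm).const_smul α).sub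
      (((hXm.sub stronglyMeasurable_const).const_smul γ).add ((hXm.sub hYm).const_smul (1 - γ)))
  have hXY₂ : MemLp (fun ω => X ω - Y ω) 2 μ := by
    convert hX₂.sub hY₂ using 2 with ω
    simp
  have hZ₂ : MemLp Z 2 μ :=
    (hG₂.const_smul α).sub ((hX₂.const_smul γ).add (hXY₂.const_smul (1 - γ)))
  have he₂' : Integrable (fun ω => ‖e ω‖ ^ 2) μ := he₂.integrable_norm_pow two_ne_zero
  calc ∫ ω, potential f xstar η γ (X' ω) (Y' ω) ∂μ
      ≤ ∫ ω, ((1 - γ) * potential f xstar η γ (X ω) (Y ω) + α * ‖e ω‖ ^ 2 + ⟪Z ω, e ω⟫) ∂μ :=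
        integral_mono hP' (((hP.const_mul _).add (he₂'.const_mul _)).add
          (hZ₂.integrable_inner he₂)) fun ω =>
          potential_step_le (hf.differentiable one_ne_zero) hlip hsc hη hα hαL hγ₀ hγ₁ hγα hβ
            (hY' ω) (hX' ω)
    _ = (1 - γ) * ∫ ω, potential f xstar η γ (X ω) (Y ω) ∂μ + α * ∫ ω, ‖e ω‖ ^ 2 ∂μ := by
        rw [integral_add _ (hZ₂.integrable_inner he₂), integral_add, integral_const_mul,
          integral_const_mul, integral_inner_eq_zero_of_condExp_eq_zero_s4 hm hZm hZ₂ he₂ he,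
          add_zero]
        exacts [hP.const_mul _, he₂'.const_mul _, (hP.const_mul _).add (he₂'.const_mul _)]

theorem integral_sub_le_integral_potential [IsProbabilityMeasure μ] (hη : 0 ≤ η) {X Y : Ω → E}
    (hfY : Integrable (fun ω => f (Y ω)) μ)
    (hP : Integrable (fun ω => potential f xstar η γ (X ω) (Y ω)) μ) :
    (∫ ω, f (Y ω) ∂μ) - f xstar ≤ ∫ ω, potential f xstar η γ (X ω) (Y ω) ∂μ :=
  calc (∫ ω, f (Y ω) ∂μ) - f xstar = ∫ ω, (f (Y ω) - f xstar) ∂μ := by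
        simp [integral_sub hfY (integrable_const _)]
    _ ≤ _ := integral_mono (hfY.sub (integrable_const _)) hP fun ω => sub_le_potential hη _ _

theorem integral_potential_self_le [CompleteSpace E] (hf : Differentiable ℝ f)
    (hlip : ∀ a b, ‖∇ f a - ∇ f b‖ ≤ L * ‖a - b‖) (hgrad : ∇ f xstar = 0) {X : Ω → E}
    (hX : Integrable (fun ω => ‖X ω - xstar‖ ^ 2) μ)
    (hP : Integrable (fun ω => potential f xstar η γ (X ω) (X ω)) μ) :
    ∫ ω, potential f xstar η γ (X ω) (X ω) ∂μ ≤ (η + L) / 2 * ∫ ω, ‖X ω - xstar‖ ^ 2 ∂μ := by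
  rw [← integral_const_mul]
  exact integral_mono hP (hX.const_mul _) fun ω => potential_self_le hf hlip hgrad _

theorem integral_sq_norm_sub_le_integral_potential [CompleteSpace E] (hf : Differentiable ℝ f)
    (hsc : ∀ a b, η * ‖a - b‖ ^ 2 ≤ ⟪∇ f a - ∇ f b, a - b⟫) (hgrad : ∇ f xstar = 0)
    (hη : 0 < η) (hγ : 0 < γ) {X Y : Ω → E} (hX : Integrable (fun ω => ‖X ω - xstar‖ ^ 2) μ)
    (hP : Integrable (fun ω => potential f xstar η γ (X ω) (Y ω)) μ) :
    ∫ ω, ‖X ω - xstar‖ ^ 2 ∂μ ≤ 2 / η * ∫ ω, potential f xstar η γ (X ω) (Y ω) ∂μ := by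
  rw [← integral_const_mul]
  exact integral_mono hX (hP.const_mul _) fun ω => sq_norm_sub_le_potential hf hsc hgrad hη hγ _ _

theorem integral_potential_iterate_le [IsProbabilityMeasure μ] [CompleteSpace E]
    {ℱ : Filtration ℕ mΩ} {x y w : ℕ → Ω → E} {N : ℕ → ℕ} {ν ρ : ℝ} (hf : ContDiff ℝ 1 f)
    (hlip : ∀ a b, ‖∇ f a - ∇ f b‖ ≤ L * ‖a - b‖)
    (hsc : ∀ a b, η * ‖a - b‖ ^ 2 ≤ ⟪∇ f a - ∇ f b, a - b⟫)
    (hmin : ∀ z, f xstar ≤ f z) (hgrad : ∇ f xstar = 0)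
    (hη : 0 ≤ η) (hα : 0 ≤ α) (hαL : α * L ≤ 1) (hγ₀ : 0 < γ) (hγ₁ : γ ≤ 1)
    (hγα : γ ^ 2 = α * η) (hβ : β = (1 - γ) / (1 + γ)) (hρ : 1 - γ < ρ)
    (hx : ∀ k, StronglyMeasurable[ℱ k] (x k)) (hy : ∀ k, StronglyMeasurable[ℱ k] (y k))
    (hx₂ : ∀ k, MemLp (fun ω => x k ω - xstar) 2 μ)
    (hy₂ : ∀ k, MemLp (fun ω => y k ω - xstar) 2 μ) (hw₂ : ∀ k, MemLp (w k) 2 μ)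
    (hw : ∀ k, μ[w k | ℱ k] =ᵐ[μ] 0)
    (hwvar : ∀ k, μ[fun ω => ‖w k ω‖ ^ 2 | ℱ k] ≤ᵐ[μ] fun _ => ν ^ 2 / N k)
    (hN : ∀ k, N k = ⌈(ρ ^ (k + 1))⁻¹⌉₊)
    (hP : ∀ k, Integrable (fun ω => potential f xstar η γ (x k ω) (y k ω)) μ)
    (hrec₁ : ∀ k ω, y (k + 1) ω = x k ω - α • (∇ f (x k ω) + w k ω))
    (hrec₂ : ∀ k ω, x (k + 1) ω = y (k + 1) ω + β • (y (k + 1) ω - y k ω)) (k : ℕ) :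
    ∫ ω, potential f xstar η γ (x k ω) (y k ω) ∂μ ≤ ρ ^ k *
      (∫ ω, potential f xstar η γ (x 0 ω) (y 0 ω) ∂μ + α * ν ^ 2 * ρ / (ρ - (1 - γ))) := by
  have hρ₀ : 0 < ρ := by linarith
  refine le_pow_mul_of_le_mul_add_pow
    (a := fun k => ∫ ω, potential f xstar η γ (x k ω) (y k ω) ∂μ) (sub_nonneg.2 hγ₁) hρ
    (mul_nonneg hα (sq_nonneg ν)) (integral_nonneg fun ω => potential_nonneg hmin hη _ _)
    (fun j => ?_) k
  have hnoise : ∫ ω, ‖w j ω‖ ^ 2 ∂μ ≤ ν ^ 2 * ρ ^ (j + 1) :=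
    (integral_le_of_condExp_le (ℱ.le j) (hwvar j)).trans
      (hN j ▸ div_natCeil_inv_le_mul (sq_nonneg ν) (pow_pos hρ₀ _))
  have hstep := integral_potential_step_le (ℱ.le j) hf hlip hsc hη hα hαL hγ₀ hγ₁ hγα hβ
    (hx j) (hy j) (hrec₁ j) (hrec₂ j) (hx₂ j) (hy₂ j)
    ((hx₂ j).gradient_comp hf hlip hgrad ((hx j).mono (ℱ.le j)).aestronglyMeasurable)
    (hw₂ j) (hw j) (hP j) (hP (j + 1))
  have := mul_le_mul_of_nonneg_left hnoise hα
  linarith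

end Expectation

theorem stmt_4_general
    {m : ℕ} {Ω : Type*} {m0 : MeasurableSpace Ω} {μ : Measure Ω}
    [IsProbabilityMeasure μ] (ℱ : Filtration ℕ m0)
    (f : EuclideanSpace ℝ (Fin m) → ℝ) (xstar : EuclideanSpace ℝ (Fin m))
    (x y w : ℕ → Ω → EuclideanSpace ℝ (Fin m)) (N : ℕ → ℕ)
    (η L ν α β γ ρ₂ : ℝ)
    (hη : 0 < η) (hηL : η ≤ L)
    (hf : ContDiff ℝ 1 f)
    (hlip : ∀ a b, ‖gradient f a - gradient f b‖ ≤ L * ‖a - b‖)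
    (hsc : ∀ a b, η * ‖a - b‖ ^ 2 ≤ (inner ℝ (gradient f a - gradient f b) (a - b) : ℝ))
    (hmin : ∀ z, f xstar ≤ f z)
    (hadaptedx : ∀ k, StronglyMeasurable[ℱ k] (x k))
    (hadaptedy : ∀ k, StronglyMeasurable[ℱ k] (y k))
    (hwint : ∀ k, Integrable (w k) μ)
    (hwsqint : ∀ k, Integrable (fun ω => ‖w k ω‖ ^ 2) μ)
    (hw0 : ∀ k, μ[w k | ℱ k] =ᵐ[μ] 0)
    (hwvar : ∀ k, μ[fun ω => ‖w k ω‖ ^ 2 | ℱ k] ≤ᵐ[μ] fun _ => ν ^ 2 / N k)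
    (hxint : ∀ k, Integrable (fun ω => ‖x k ω - xstar‖ ^ 2) μ)
    (hyint : ∀ k, Integrable (fun ω => ‖y k ω - xstar‖ ^ 2) μ)
    (hfyint : ∀ k, Integrable (fun ω => f (y k ω)) μ)
    (hα : 0 < α) (hα' : α ≤ 1 / L)
    (hγ : γ = Real.sqrt (α * η)) (hβ : β = (1 - γ) / (1 + γ))
    (hρ₂ : ρ₂ ∈ Set.Ioo (1 - γ) 1)
    (hN : ∀ k, N k = ⌈(ρ₂ ^ (k + 1))⁻¹⌉₊)
    (hinit : x 0 = y 0)
    (hrec1 : ∀ k ω, y (k + 1) ω = x k ω - α • (gradient f (x k ω) + w k ω))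
    (hrec2 : ∀ k ω, x (k + 1) ω = y (k + 1) ω + β • (y (k + 1) ω - y k ω)) :
    (∀ k, (∫ ω, f (y k ω) ∂μ) - f xstar ≤
        ρ₂ ^ k * ((η + L) / 2 * (∫ ω, ‖x 0 ω - xstar‖ ^ 2 ∂μ)
          + ρ₂ * ν ^ 2 / (ρ₂ - (1 - γ)) * (α + (1 - γ) * γ / (2 * η)))) ∧
      ∃ c : ℝ, 0 < c ∧ ∀ k, ∫ ω, ‖x k ω - xstar‖ ^ 2 ∂μ ≤ c * ρ₂ ^ k := by
  obtain ⟨hρ₁, hρ₁'⟩ := hρ₂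
  have hαη : 0 < α * η := mul_pos hα hη
  have hαL : α * L ≤ 1 := by rwa [le_div_iff₀ (hη.trans_le hηL)] at hα'
  have hγ₀ : 0 < γ := hγ ▸ Real.sqrt_pos.2 hαη
  have hγα : γ ^ 2 = α * η := hγ ▸ Real.sq_sqrt hαη.le
  have hγ₁ : γ ≤ 1 := hγ ▸ Real.sqrt_le_one.2 (by nlinarith)
  have hρ : 0 < ρ₂ := by linarith
  have hfd : Differentiable ℝ f := hf.differentiable one_ne_zero
  have hgrad : ∇ f xstar = 0 := by
    simp [gradient, IsLocalMin.fderiv_eq_zero (f := f) (Eventually.of_forall hmin)]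
  have hX₂ k : MemLp (fun ω => x k ω - xstar) 2 μ :=
    (memLp_two_iff_integrable_sq_norm (((hadaptedx k).mono (ℱ.le k)).aestronglyMeasurable.sub
      aestronglyMeasurable_const)).2 (hxint k)
  have hY₂ k : MemLp (fun ω => y k ω - xstar) 2 μ :=
    (memLp_two_iff_integrable_sq_norm (((hadaptedy k).mono (ℱ.le k)).aestronglyMeasurable.sub
      aestronglyMeasurable_const)).2 (hyint k)
  have hP k : Integrable (fun ω => potential f xstar η γ (x k ω) (y k ω)) μ :=
    integrable_potential (hfyint k) (hX₂ k) (hY₂ k)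
  have hdecay := integral_potential_iterate_le hf hlip hsc hmin hgrad hη.le hα.le hαL hγ₀ hγ₁
    hγα hβ hρ₁ hadaptedx hadaptedy hX₂ hY₂
    (fun k => (memLp_two_iff_integrable_sq_norm (hwint k).1).2 (hwsqint k)) hw0 hwvar hN hP
    hrec1 hrec2
  set M := ∫ ω, potential f xstar η γ (x 0 ω) (y 0 ω) ∂μ + α * ν ^ 2 * ρ₂ / (ρ₂ - (1 - γ))
  have hM : 0 ≤ M := add_nonneg (integral_nonneg fun ω => potential_nonneg hmin hη.le _ _)
    (div_nonneg (by positivity) (by linarith))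
  refine ⟨fun k => ?_, 2 / η * M + 1, by positivity, fun k => ?_⟩
  · have hMC : M ≤ (η + L) / 2 * (∫ ω, ‖x 0 ω - xstar‖ ^ 2 ∂μ)
          + ρ₂ * ν ^ 2 / (ρ₂ - (1 - γ)) * (α + (1 - γ) * γ / (2 * η)) := by
      have h₀ := integral_potential_self_le hfd hlip hgrad (hxint 0)
        (by simpa only [← hinit] using hP 0)
      have : 0 ≤ ρ₂ * ν ^ 2 / (ρ₂ - (1 - γ)) * ((1 - γ) * γ / (2 * η)) :=
        mul_nonneg (div_nonneg (by positivity) (by linarith))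
          (div_nonneg (mul_nonneg (by linarith) hγ₀.le) (by positivity))
      have : α * ν ^ 2 * ρ₂ / (ρ₂ - (1 - γ)) = ρ₂ * ν ^ 2 / (ρ₂ - (1 - γ)) * α := by ring
      simp only [M, ← hinit]
      linarith
    calc (∫ ω, f (y k ω) ∂μ) - f xstar ≤ ∫ ω, potential f xstar η γ (x k ω) (y k ω) ∂μ :=
          integral_sub_le_integral_potential hη.le (hfyint k) (hP k)
      _ ≤ ρ₂ ^ k * M := hdecay k
      _ ≤ _ := by gcongr
  · calc ∫ ω, ‖x k ω - xstar‖ ^ 2 ∂μ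
        ≤ 2 / η * ∫ ω, potential f xstar η γ (x k ω) (y k ω) ∂μ :=
          integral_sq_norm_sub_le_integral_potential hfd hsc hgrad hη hγ₀ (hxint k) (hP k)
      _ ≤ 2 / η * (ρ₂ ^ k * M) := by gcongr; exact hdecay k
      _ ≤ (2 / η * M + 1) * ρ₂ ^ k := by nlinarith [pow_pos hρ k]

/-- **Proposition 2 (geometric rate for variance-reduced accelerated SGD).** -/
theorem stmt_4
    {m : ℕ} {Ω : Type*} {m0 : MeasurableSpace Ω} {μ : Measure Ω}
    [IsProbabilityMeasure μ] (ℱ : Filtration ℕ m0)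
    (f : EuclideanSpace ℝ (Fin m) → ℝ) (xstar : EuclideanSpace ℝ (Fin m))
    (x y w : ℕ → Ω → EuclideanSpace ℝ (Fin m)) (N : ℕ → ℕ)
    (η L ν α β γ ρ₂ : ℝ)
    (hη : 0 < η) (hηL : η ≤ L) (hν : 0 < ν)
    (hf : ContDiff ℝ 1 f)
    (hlip : ∀ a b, ‖gradient f a - gradient f b‖ ≤ L * ‖a - b‖)
    (hsc : ∀ a b, η * ‖a - b‖ ^ 2 ≤ (inner ℝ (gradient f a - gradient f b) (a - b) : ℝ))
    (hmin : ∀ z, f xstar ≤ f z)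
    (hadaptedx : ∀ k, StronglyMeasurable[ℱ k] (x k))
    (hadaptedy : ∀ k, StronglyMeasurable[ℱ k] (y k))
    (hwint : ∀ k, Integrable (w k) μ)
    (hwsqint : ∀ k, Integrable (fun ω => ‖w k ω‖ ^ 2) μ)
    (hw0 : ∀ k, μ[w k | ℱ k] =ᵐ[μ] 0)
    (hwvar : ∀ k, μ[fun ω => ‖w k ω‖ ^ 2 | ℱ k] ≤ᵐ[μ] fun _ => ν ^ 2 / N k)
    (hxint : ∀ k, Integrable (fun ω => ‖x k ω - xstar‖ ^ 2) μ)
    (hyint : ∀ k, Integrable (fun ω => ‖y k ω - xstar‖ ^ 2) μ)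
    (hfyint : ∀ k, Integrable (fun ω => f (y k ω)) μ)
    (hα : 0 < α) (hα' : α ≤ 1 / L)
    (hγ : γ = Real.sqrt (α * η)) (hβ : β = (1 - γ) / (1 + γ))
    (hρ₂ : ρ₂ ∈ Set.Ioo (1 - γ) 1)
    (hN : ∀ k, N k = ⌈(ρ₂ ^ (k + 1))⁻¹⌉₊)
    (hinit : x 0 = y 0)
    (hrec1 : ∀ k ω, y (k + 1) ω = x k ω - α • (gradient f (x k ω) + w k ω))
    (hrec2 : ∀ k ω, x (k + 1) ω = y (k + 1) ω + β • (y (k + 1) ω - y k ω)) :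
    (∀ k, (∫ ω, f (y k ω) ∂μ) - f xstar ≤
        ρ₂ ^ k * ((η + L) / 2 * (∫ ω, ‖x 0 ω - xstar‖ ^ 2 ∂μ)
          + ρ₂ * ν ^ 2 / (ρ₂ - (1 - γ)) * (α + (1 - γ) * γ / (2 * η)))) ∧
      ∃ c : ℝ, 0 < c ∧ ∀ k, ∫ ω, ‖x k ω - xstar‖ ^ 2 ∂μ ≤ c * ρ₂ ^ k :=
  stmt_4_general ℱ f xstar x y w N η L ν α β γ ρ₂ hη hηL hf hlip hsc hmin hadaptedx hadaptedy hwint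
    hwsqint hw0 hwvar hxint hyint hfyint hα hα' hγ hβ hρ₂ hN hinit hrec1 hrec2
end

section
/- Let A be a real n×n matrix with operator norm ‖A‖ ≤ ϱ for some ϱ ∈ (0,1), let v > 0, define A₀ = A and A_k = ((k+1)/k)^{v/2} A for k ≥ 1, and define the products Φ_{k,j} = A_k A_{k−1} ⋯ A_j with the convention Φ_{j,j+1} = I. Then for any a > 0, sup_{k ≥ 1} Σ_{t=0}^{k} ‖Φ_{k,t+1}‖^a ≤ c_{ϱ^a, av/2} · (e^{av} ϱ^{−a} − 1)/(1 − ϱ^a) + 2/(a ϱ^a ln(1/ϱ)), where c_{q,w} = e^{−w} (w / ln(1/q))^w. -/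
open Filter Real Matrix
open scoped Topology

/-!
By submultiplicativity the scalar factors of the `A_j` telescope, giving
`‖Φ_{k,t+1}‖ ≤ ϱ^(k-t) ((k+1)/(t+1))^(v/2)`; with `q = ϱ^a`, `w = av/2` it remains to bound
`∑_t q^(k-t) ((k+1)/(t+1))^w`. For the boundedly many `t` with `(t+1) log(1/q) < 2w` the term is at
most `c_{q,w} q^(-(t+1))`, since `c_{q,w}` is the maximum of `x ↦ q^x x^w`. For the other `t`,
`log (1 + y) ≤ y` makes the term at most `√q^(k-t)`, and the geometric series is bounded by
`1/(1-√q) ≤ 2/(q log(1/q))`.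
-/

open Finset

theorem norm_le_pow_mul_div_of_eq_mul {R : Type*} [SeminormedRing R] {Φ : ℕ → ℕ → R}
    {M : ℕ → R} {ϱ : ℝ} {g : ℕ → ℝ} (hg : ∀ j, 0 < g j) (hΦ : ∀ j, ‖Φ j (j + 1)‖ ≤ 1)
    (hrec : ∀ k j, j ≤ k → Φ k j = Φ k (j + 1) * M j)
    (hM : ∀ j, ‖M (j + 1)‖ ≤ ϱ * (g (j + 1) / g j)) {k t : ℕ} (htk : t ≤ k) :
    ‖Φ k (t + 1)‖ ≤ ϱ ^ (k - t) * (g k / g t) := by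
  induction htk using Nat.decreasingInduction with
  | self => simpa [div_self (hg k).ne'] using hΦ k
  | of_succ t htk ih =>
    calc ‖Φ k (t + 1)‖ = ‖Φ k (t + 1 + 1) * M (t + 1)‖ := by rw [hrec k (t + 1) htk]
      _ ≤ ‖Φ k (t + 1 + 1)‖ * ‖M (t + 1)‖ := norm_mul_le _ _
      _ ≤ ϱ ^ (k - (t + 1)) * (g k / g (t + 1)) * (ϱ * (g (t + 1) / g t)) :=
        mul_le_mul ih (hM t) (norm_nonneg _) ((norm_nonneg _).trans ih)
      _ = ϱ ^ (k - t) * (g k / g t) := by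
        rw [show k - t = k - (t + 1) + 1 by omega, pow_succ]
        field_simp [(hg (t + 1)).ne']

theorem sum_range_inv_pow_succ {K : Type*} [Field K] {x : K} (hx0 : x ≠ 0) (hx1 : x ≠ 1)
    (M : ℕ) : ∑ t ∈ range M, x⁻¹ ^ (t + 1) = (x⁻¹ ^ M - 1) / (1 - x) := by
  induction M with
  | zero => simp
  | succ M ih =>
    rw [sum_range_succ, ih]
    field_simp [sub_ne_zero.2 hx1.symm]
    linear_combination (-x⁻¹ ^ M) * mul_inv_cancel₀ hx0

/-- `c q w` of the paper: the maximum of `x ↦ q ^ x * x ^ w` over `x > 0`. -/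
noncomputable def peakConst (q w : ℝ) : ℝ := exp (-w) * (w / log (1 / q)) ^ w

section Scalar

variable {q w : ℝ}

theorem rpow_mul_rpow_le_peakConst (hq0 : 0 < q) (hq1 : q < 1) (hw : 0 < w) {x : ℝ}
    (hx : 0 < x) : q ^ x * x ^ w ≤ peakConst q w := by
  set L := log (1 / q)
  have hL : 0 < L := log_pos (one_lt_one_div hq0 hq1)
  have hlogq : log q = -L := by simp [L]
  have key : w * log (x * L / w) ≤ x * L - w := by
    have := mul_le_mul_of_nonneg_left (log_le_sub_one_of_pos (by positivity : 0 < x * L / w)) hw.le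
    rwa [mul_sub, mul_div_cancel₀ _ hw.ne', mul_one] at this
  rw [log_div (by positivity) hw.ne', log_mul hx.ne' hL.ne'] at key
  rw [peakConst, rpow_def_of_pos hq0, rpow_def_of_pos hx, rpow_def_of_pos (by positivity),
    ← exp_add, ← exp_add, exp_le_exp, hlogq, log_div hw.ne' hL.ne']
  linarith

theorem div_rpow_le_inv_sqrt_pow (hq0 : 0 < q) (hw : 0 ≤ w) {k t : ℕ} (htk : t ≤ k)
    (ht : 2 * w ≤ (t + 1) * log (1 / q)) :
    (((k : ℝ) + 1) / (t + 1)) ^ w ≤ (√q)⁻¹ ^ (k - t) := by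
  set d : ℝ := ((k - t : ℕ) : ℝ)
  have hd : 0 ≤ d := Nat.cast_nonneg _
  have hkt : ((k : ℝ) + 1) / (t + 1) = d / (t + 1) + 1 := by
    simp only [d, Nat.cast_sub htk]; field_simp; ring
  have hsqrt : (√q)⁻¹ = exp (log (1 / q) / 2) := by
    rw [← log_sqrt (by positivity), exp_log (by positivity), sqrt_div' _ hq0.le, sqrt_one, one_div]
  calc (((k : ℝ) + 1) / (t + 1)) ^ w ≤ exp (d / (t + 1)) ^ w := by
        rw [hkt]; gcongr; exact add_one_le_exp _
    _ = exp (w * d / (t + 1)) := by rw [← exp_mul]; ring_nf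
    _ ≤ exp (d * (log (1 / q) / 2)) := by
        gcongr
        rw [div_le_iff₀ (by positivity)]
        nlinarith
    _ = (√q)⁻¹ ^ (k - t) := by rw [exp_nat_mul, hsqrt]

theorem one_div_one_sub_sqrt_le (hq0 : 0 < q) (hq1 : q < 1) :
    1 / (1 - √q) ≤ 2 / (q * log (1 / q)) := by
  have hs0 : 0 < √q := sqrt_pos.2 hq0
  have hs1 : √q < 1 := by simpa using sqrt_lt_sqrt hq0.le hq1
  have hqs : q ≤ √q := by
    rw [le_sqrt hq0.le hq0.le]; nlinarith
  have hL : 0 < log (1 / q) := log_pos (one_lt_one_div hq0 hq1)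
  have hlog : log (1 / q) / 2 ≤ 1 / √q - 1 := by
    rw [← log_sqrt (by positivity), sqrt_div' _ hq0.le, sqrt_one]
    exact log_le_sub_one_of_pos (by positivity)
  rw [div_le_div_iff₀ (by linarith) (by positivity)]
  rw [div_sub_one hs0.ne', le_div_iff₀ hs0] at hlog
  nlinarith

theorem peakConst_pos (hq0 : 0 < q) (hq1 : q < 1) (hw : 0 < w) : 0 < peakConst q w :=
  (by positivity : 0 < q ^ (1 : ℝ) * 1 ^ w).trans_le
    (rpow_mul_rpow_le_peakConst hq0 hq1 hw one_pos)

theorem inv_pow_ceil_le (hq0 : 0 < q) (hq1 : q < 1) (hw : 0 ≤ w) :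
    q⁻¹ ^ ⌈2 * w / log (1 / q)⌉₊ ≤ exp (2 * w) * q⁻¹ := by
  have hL : 0 < log (1 / q) := log_pos (one_lt_one_div hq0 hq1)
  have hM := Nat.ceil_lt_add_one (by positivity : 0 ≤ 2 * w / log (1 / q))
  rw [← sub_lt_iff_lt_add, lt_div_iff₀ hL] at hM
  have hq : q⁻¹ = exp (log (1 / q)) := by rw [exp_log (by positivity), one_div]
  rw [hq, ← exp_nat_mul, ← exp_add, exp_le_exp]
  linarith

theorem sum_head_le (hq0 : 0 < q) (hq1 : q < 1) (hw : 0 < w) (k M : ℕ) :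
    ∑ t ∈ range (k + 1) with t < M, q ^ (k - t) * (((k : ℝ) + 1) / (t + 1)) ^ w
      ≤ peakConst q w * ((q⁻¹ ^ M - 1) / (1 - q)) := by
  have hterm : ∀ t ∈ range (k + 1),
      q ^ (k - t) * (((k : ℝ) + 1) / (t + 1)) ^ w ≤ peakConst q w * q⁻¹ ^ (t + 1) := by
    intro t ht
    have hsplit : q ^ (k - t) = q ^ (k + 1) * q⁻¹ ^ (t + 1) := by
      rw [inv_pow, eq_mul_inv_iff_mul_eq₀ (by positivity), ← pow_add]
      congr 1
      have := mem_range.1 ht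
      omega
    calc q ^ (k - t) * (((k : ℝ) + 1) / (t + 1)) ^ w
        ≤ q ^ (k - t) * ((k : ℝ) + 1) ^ w := by
          gcongr
          exact div_le_self (by positivity) (by simp)
      _ = q ^ ((k : ℝ) + 1) * ((k : ℝ) + 1) ^ w * q⁻¹ ^ (t + 1) := by
          rw [hsplit, ← rpow_natCast]; push_cast; ring
      _ ≤ peakConst q w * q⁻¹ ^ (t + 1) := by
          gcongr
          exact rpow_mul_rpow_le_peakConst hq0 hq1 hw (by positivity)
  calc _ ≤ ∑ t ∈ range (k + 1) with t < M, peakConst q w * q⁻¹ ^ (t + 1) :=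
        sum_le_sum fun t ht => hterm t (mem_filter.1 ht).1
    _ ≤ ∑ t ∈ range M, peakConst q w * q⁻¹ ^ (t + 1) :=
        sum_le_sum_of_subset_of_nonneg (fun t ht => mem_range.2 (mem_filter.1 ht).2)
          (fun _ _ _ => mul_nonneg (peakConst_pos hq0 hq1 hw).le (by positivity))
    _ = _ := by rw [← mul_sum, sum_range_inv_pow_succ hq0.ne' hq1.ne]

theorem sum_tail_le (hq0 : 0 < q) (hq1 : q < 1) (hw : 0 ≤ w) (k M : ℕ)
    (hM : 2 * w ≤ (M + 1) * log (1 / q)) :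
    ∑ t ∈ range (k + 1) with ¬ t < M, q ^ (k - t) * (((k : ℝ) + 1) / (t + 1)) ^ w
      ≤ 2 / (q * log (1 / q)) := by
  have hL : 0 < log (1 / q) := log_pos (one_lt_one_div hq0 hq1)
  have hterm : ∀ t ∈ {t ∈ range (k + 1) | ¬ t < M},
      q ^ (k - t) * (((k : ℝ) + 1) / (t + 1)) ^ w ≤ √q ^ (k - t) := by
    intro t ht
    obtain ⟨htk, hMt⟩ := mem_filter.1 ht
    have ht : 2 * w ≤ (t + 1) * log (1 / q) :=
      hM.trans (by gcongr; exact not_lt.1 hMt)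
    calc _ ≤ q ^ (k - t) * (√q)⁻¹ ^ (k - t) := by
          gcongr
          exact div_rpow_le_inv_sqrt_pow hq0 hw (Nat.lt_succ_iff.1 (mem_range.1 htk)) ht
      _ = √q ^ (k - t) := by rw [← mul_pow, ← div_eq_mul_inv, div_sqrt]
  calc _ ≤ ∑ t ∈ range (k + 1), √q ^ (k - t) :=
        (sum_le_sum hterm).trans
          (sum_le_sum_of_subset_of_nonneg (filter_subset _ _) (fun _ _ _ => by positivity))
    _ = ∑ t ∈ range (k + 1), √q ^ t := by simpa using sum_range_reflect (fun t => √q ^ t) (k + 1)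
    _ ≤ 1 / (1 - √q) := by
        simpa using geom_sum_Ico_le_of_lt_one (m := 0) (n := k + 1) (sqrt_nonneg q)
          (by simpa using sqrt_lt_sqrt hq0.le hq1)
    _ ≤ _ := one_div_one_sub_sqrt_le hq0 hq1

theorem sum_pow_mul_div_rpow_le (hq0 : 0 < q) (hq1 : q < 1) (hw : 0 < w) (k : ℕ) :
    ∑ t ∈ range (k + 1), q ^ (k - t) * (((k : ℝ) + 1) / (t + 1)) ^ w ≤
      peakConst q w * (exp (2 * w) * q⁻¹ - 1) / (1 - q) + 2 / (q * log (1 / q)) := by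
  set M := ⌈2 * w / log (1 / q)⌉₊
  have hL : 0 < log (1 / q) := log_pos (one_lt_one_div hq0 hq1)
  have hM : 2 * w ≤ (M + 1) * log (1 / q) := by
    have := Nat.le_ceil (2 * w / log (1 / q))
    rw [div_le_iff₀ hL] at this
    linarith
  rw [← sum_filter_add_sum_filter_not _ (· < M)]
  gcongr ?_ + ?_
  · calc _ ≤ peakConst q w * ((q⁻¹ ^ M - 1) / (1 - q)) := sum_head_le hq0 hq1 hw k M
      _ ≤ _ := by
        rw [← mul_div_assoc]
        have hc := (peakConst_pos hq0 hq1 hw).le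
        have h1q := sub_pos.2 hq1
        gcongr
        exact inv_pow_ceil_le hq0 hq1 hw.le
  · exact sum_tail_le hq0 hq1 hw.le k M hM

end Scalar

theorem stmt_15_general
    {n : ℕ} (A : Matrix (Fin n) (Fin n) ℝ) (v ϱ : ℝ)
    (hv : 0 < v) (hϱ : ϱ ∈ Set.Ioo (0 : ℝ) 1)
    (hA : ‖Matrix.toEuclideanCLM (𝕜 := ℝ) A‖ ≤ ϱ)
    (Ak : ℕ → Matrix (Fin n) (Fin n) ℝ)
    (hAk : ∀ k : ℕ, 1 ≤ k → Ak k = ((((k : ℝ) + 1) / k) ^ (v / 2)) • A)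
    (Φ : ℕ → ℕ → Matrix (Fin n) (Fin n) ℝ)
    (hΦ1 : ∀ j, Φ j (j + 1) = 1)
    (hΦ2 : ∀ k j, j ≤ k → Φ k j = Φ k (j + 1) * Ak j) :
    ∀ a : ℝ, 0 < a → ∀ k : ℕ, 1 ≤ k →
      ∑ t ∈ Finset.range (k + 1), ‖Matrix.toEuclideanCLM (𝕜 := ℝ) (Φ k (t + 1))‖ ^ a ≤
        Real.exp (-(a * v / 2)) * (a * v / 2 / Real.log (1 / ϱ ^ a)) ^ (a * v / 2)
            * (Real.exp (a * v) * ϱ ^ (-a) - 1) / (1 - ϱ ^ a)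
          + 2 / (a * ϱ ^ a * Real.log (1 / ϱ)) := by
  intro a ha k _
  obtain ⟨hϱ0, hϱ1⟩ := hϱ
  set g : ℕ → ℝ := fun j => ((j : ℝ) + 1) ^ (v / 2)
  have hstep : ∀ j, ‖toEuclideanCLM (𝕜 := ℝ) (Ak (j + 1))‖ ≤ ϱ * (g (j + 1) / g j) := by
    intro j
    rw [hAk (j + 1) j.succ_pos, map_smul, norm_smul, norm_of_nonneg (by positivity), mul_comm,
      ← div_rpow (by positivity) (by positivity)]
    push_cast
    gcongr
  have hnorm : ∀ t ∈ range (k + 1), ‖toEuclideanCLM (𝕜 := ℝ) (Φ k (t + 1))‖ ^ a ≤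
      (ϱ ^ a) ^ (k - t) * (((k : ℝ) + 1) / (t + 1)) ^ (a * v / 2) := by
    intro t ht
    have h := norm_le_pow_mul_div_of_eq_mul (Φ := fun k j => toEuclideanCLM (𝕜 := ℝ) (Φ k j))
      (M := fun j => toEuclideanCLM (𝕜 := ℝ) (Ak j))
      (fun j => by positivity)
      (fun j => by rw [hΦ1, map_one]; exact ContinuousLinearMap.norm_id_le)
      (fun k j hjk => by rw [hΦ2 k j hjk, map_mul]) hstep (Nat.lt_succ_iff.1 (mem_range.1 ht))
    calc _ ≤ (ϱ ^ (k - t) * (g k / g t)) ^ a := by gcongr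
      _ = _ := by
        rw [mul_rpow (by positivity) (by positivity), ← rpow_pow_comm hϱ0.le,
          ← div_rpow (by positivity) (by positivity), ← rpow_mul (by positivity)]
        ring_nf
  have hlog : log (1 / ϱ ^ a) = a * log (1 / ϱ) := by
    rw [one_div, one_div, log_inv, log_inv, log_rpow hϱ0]
    ring
  calc _ ≤ _ := sum_le_sum hnorm
    _ ≤ _ := sum_pow_mul_div_rpow_le (rpow_pos_of_pos hϱ0 a) (rpow_lt_one hϱ0.le hϱ1 ha)
        (by positivity) k
    _ = _ := by
      rw [peakConst, hlog, rpow_neg hϱ0.le]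
      ring_nf

/-- **Lemma 6 (uniform bound on products of the time-varying matrices).**
`Φ k j = A_k ⋯ A_j` with `Φ j (j+1) = I`, where `A₀ = A` and
`A_k = ((k+1)/k)^{v/2} A` for `k ≥ 1`; the norm is the ℓ²-operator norm. -/
theorem stmt_15
    {n : ℕ} (A : Matrix (Fin n) (Fin n) ℝ) (v ϱ : ℝ)
    (hv : 0 < v) (hϱ : ϱ ∈ Set.Ioo (0 : ℝ) 1)
    (hA : ‖Matrix.toEuclideanCLM (𝕜 := ℝ) A‖ ≤ ϱ)
    (Ak : ℕ → Matrix (Fin n) (Fin n) ℝ)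
    (hA0 : Ak 0 = A)
    (hAk : ∀ k : ℕ, 1 ≤ k → Ak k = ((((k : ℝ) + 1) / k) ^ (v / 2)) • A)
    (Φ : ℕ → ℕ → Matrix (Fin n) (Fin n) ℝ)
    (hΦ1 : ∀ j, Φ j (j + 1) = 1)
    (hΦ2 : ∀ k j, j ≤ k → Φ k j = Φ k (j + 1) * Ak j) :
    ∀ a : ℝ, 0 < a → ∀ k : ℕ, 1 ≤ k →
      ∑ t ∈ Finset.range (k + 1), ‖Matrix.toEuclideanCLM (𝕜 := ℝ) (Φ k (t + 1))‖ ^ a ≤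
        Real.exp (-(a * v / 2)) * (a * v / 2 / Real.log (1 / ϱ ^ a)) ^ (a * v / 2)
            * (Real.exp (a * v) * ϱ ^ (-a) - 1) / (1 - ϱ ^ a)
          + 2 / (a * ϱ ^ a * Real.log (1 / ϱ)) :=
  stmt_15_general A v ϱ hv hϱ hA Ak hAk Φ hΦ1 hΦ2
end
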